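/- For n ≥ 1, positive integers a_1, ..., a_n, and v in X, the telescoping identity holds: the sum over i from 0 to n-1 of S(x_{a_1} ⋯ x_{a_i}) ⋄ (x_{a_{i+1}} ⋯ x_{a_n} v) equals f_{a_n}(S(x_{a_1} ⋯ x_{a_{n-1}}), v), where S is the anti-automorphism of X with S(x_k) = -x_k. -/

import Mathlib

noncomputable section
namespace BlockShuffle

/-- The underlying vector space of `𝔛 = ℚ⟨x₁, x₂, …⟩`, with words as basis. -/
abbrev XX : Type := List ℕ →₀ ℚ

/-- The basis word `x_{a₁} ⋯ x_{a_d}`. -/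
def wX (w : List ℕ) : XX := Finsupp.single w 1

/-- Left multiplication by the generator `x_a`. -/
def consX (a : ℕ) : XX →ₗ[ℚ] XX := Finsupp.lmapDomain ℚ ℚ (List.cons a)

/-- Left multiplication by the word `x_{a₁} ⋯ x_{a_d}`. -/
def consListX (w : List ℕ) : XX →ₗ[ℚ] XX := Finsupp.lmapDomain ℚ ℚ (w ++ ·)

/-- The shift operator `s_k` with `s_k(x_i w) = x_{i+k} w`, `s_k(1) = 0`. -/
def shiftX (k : ℕ) : XX →ₗ[ℚ] XX :=
  Finsupp.lsum ℚ fun w => LinearMap.toSpanSingleton ℚ XX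
    (match w with
     | [] => 0
     | i :: t => Finsupp.single ((i + k) :: t) (1 : ℚ))

/-- The block shuffle product `⋄` on basis words. -/
def dshW : List ℕ → List ℕ → XX
  | [], v => wX v
  | u, [] => wX u
  | a :: u, b :: v =>
      consX a (dshW u (b :: v)) + consX b (dshW (a :: u) v) - shiftX (a + b) (dshW u v)
  termination_by u v => u.length + v.length

/-- The block shuffle product `⋄ : 𝔛 × 𝔛 → 𝔛`, as a bilinear map. -/
def dshL : XX →ₗ[ℚ] XX →ₗ[ℚ] XX :=
  Finsupp.lsum ℚ fun u => LinearMap.toSpanSingleton ℚ (XX →ₗ[ℚ] XX)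
    (Finsupp.lsum ℚ fun v => LinearMap.toSpanSingleton ℚ XX (dshW u v))

/-- The maps `f_c` on basis words. -/
def fW : ℕ → List ℕ → List ℕ → XX
  | c, [], v => wX (c :: v)
  | c, u, [] => wX (c :: u)
  | c, a :: u, b :: v =>
      consX c (fW a u (b :: v)) + consX c (fW b (a :: u) v) - fW (c + a + b) u v
  termination_by _ u v => u.length + v.length

/-- The bilinear maps `f_c : 𝔛 × 𝔛 → 𝔛`. -/
def fL (c : ℕ) : XX →ₗ[ℚ] XX →ₗ[ℚ] XX :=
  Finsupp.lsum ℚ fun u => LinearMap.toSpanSingleton ℚ (XX →ₗ[ℚ] XX)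
    (Finsupp.lsum ℚ fun v => LinearMap.toSpanSingleton ℚ XX (fW c u v))

/-- The anti-automorphism `S` of `𝔛` with `S(x_k) = -x_k`. -/
def SX : XX →ₗ[ℚ] XX :=
  Finsupp.lsum ℚ fun w => LinearMap.toSpanSingleton ℚ XX (((-1 : ℚ) ^ w.length) • wX w.reverse)

/-- The subspace `𝔛⁺ ⋄ 𝔛⁺` spanned by block shuffle products of nonconstant elements. -/
def diamondSpan : Submodule ℚ XX :=
  Submodule.span ℚ
    {x | ∃ u v : List ℕ, u ≠ [] ∧ v ≠ [] ∧ (∀ i ∈ u, 1 ≤ i) ∧ (∀ i ∈ v, 1 ≤ i) ∧ x = dshW u v}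



lemma consX_wX (a : ℕ) (w : List ℕ) : consX a (wX w) = wX (a :: w) := by
  simp [consX, wX]

lemma consListX_wX (u w : List ℕ) : consListX u (wX w) = wX (u ++ w) := by
  simp [consListX, wX]

lemma shiftX_wX_nil (k : ℕ) : shiftX k (wX []) = 0 := by
  simp [shiftX, wX]

lemma shiftX_wX_cons (k i : ℕ) (t : List ℕ) : shiftX k (wX (i :: t)) = wX ((i + k) :: t) := by
  simp [shiftX, wX]

lemma dshL_wX_wX (u v : List ℕ) : dshL (wX u) (wX v) = dshW u v := by
  simp [dshL, wX]

lemma fL_wX_wX (c : ℕ) (u v : List ℕ) : fL c (wX u) (wX v) = fW c u v := by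
  simp [fL, wX]

lemma SX_wX (w : List ℕ) : SX (wX w) = ((-1 : ℚ) ^ w.length) • wX w.reverse := by
  simp [SX, wX]

lemma shiftX_consX (k a : ℕ) (x : XX) : shiftX k (consX a x) = consX (a + k) x := by
  induction x using Finsupp.induction_linear with
  | zero => simp
  | add f g hf hg => simp [map_add, hf, hg]
  | single w c =>
      rw [show (Finsupp.single w c : XX) = c • wX w by simp [wX, Finsupp.smul_single]]
      simp [map_smul, consX_wX, shiftX_wX_cons]

lemma shiftX_fW (k : ℕ) : ∀ (c : ℕ) (u v : List ℕ), shiftX k (fW c u v) = fW (c + k) u v := by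
  intro c u v
  induction c, u, v using fW.induct with
  | case1 c v => simp [fW, shiftX_wX_cons]
  | case2 c u h => cases u with
    | nil => simp [fW, shiftX_wX_cons]
    | cons a t => simp [fW, shiftX_wX_cons]
  | case3 c a u b v ih1 ih2 ih3 =>
      rw [fW, map_sub, map_add, shiftX_consX, shiftX_consX, ih3,
        show c + a + b + k = c + k + a + b by omega, ← fW]

lemma dshW_nil_left (v : List ℕ) : dshW [] v = wX v := by rw [dshW]
lemma dshW_nil_right (a : ℕ) (u : List ℕ) : dshW (a :: u) [] = wX (a :: u) := by
  rw [dshW]; simp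
lemma dshW_cons_cons (a b : ℕ) (u v : List ℕ) : dshW (a :: u) (b :: v)
    = consX a (dshW u (b :: v)) + consX b (dshW (a :: u) v) - shiftX (a + b) (dshW u v) := by
  rw [dshW]
lemma fW_nil_left (c : ℕ) (v : List ℕ) : fW c [] v = wX (c :: v) := by rw [fW]
lemma fW_nil_right (c : ℕ) (u : List ℕ) : fW c u [] = wX (c :: u) := by
  cases u with
  | nil => rw [fW]
  | cons a t => rw [fW]; simp
lemma fW_cons_cons (c a b : ℕ) (u v : List ℕ) : fW c (a :: u) (b :: v)
    = consX c (fW a u (b :: v)) + consX c (fW b (a :: u) v) - fW (c + a + b) u v := by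
  rw [fW]

lemma dshW_cons' : ∀ (N : ℕ) (u v : List ℕ) (a b : ℕ), u.length + v.length ≤ N →
    dshW (a :: u) (b :: v) = fW a u (b :: v) + fW b (a :: u) v := by
  intro N
  induction N with
  | zero =>
      intro u v a b h
      obtain ⟨rfl, rfl⟩ : u = [] ∧ v = [] := by
        constructor <;> (apply List.eq_nil_of_length_eq_zero; omega)
      rw [dshW_cons_cons, dshW_nil_left, dshW_nil_right, dshW_nil_left,
        fW_nil_left, fW_nil_right, shiftX_wX_nil, consX_wX, consX_wX]
      abel
  | succ N ih =>
      intro u v a b h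
      match u, v with
      | [], [] =>
          rw [dshW_cons_cons, dshW_nil_left, dshW_nil_right, dshW_nil_left,
            fW_nil_left, fW_nil_right, shiftX_wX_nil, consX_wX, consX_wX]
          abel
      | [], b' :: v' =>
          rw [dshW_cons_cons, dshW_nil_left, dshW_nil_left,
            ih [] v' a b' (by simp at h ⊢; omega)]
          simp only [map_add, fW_nil_left, fW_cons_cons, consX_wX, shiftX_wX_cons]
          rw [show b' + (a + b) = b + a + b' from by omega]
          abel
      | a' :: u', [] =>
          rw [dshW_cons_cons, dshW_nil_right, dshW_nil_right,
            ih u' [] a' b (by simp at h ⊢; omega)]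
          simp only [map_add, fW_nil_left, fW_nil_right, fW_cons_cons, consX_wX, shiftX_wX_cons]
          rw [show a' + (a + b) = a + a' + b from by omega]
          abel
      | a' :: u', b' :: v' =>
          rw [dshW_cons_cons,
            ih u' (b' :: v') a' b (by simp at h ⊢; omega),
            ih (a' :: u') v' a b' (by simp at h ⊢; omega),
            ih u' v' a' b' (by simp at h ⊢; omega)]
          rw [map_add (shiftX (a + b)), shiftX_fW, shiftX_fW]
          conv_rhs => rw [fW_cons_cons a a' b u' (b' :: v'), fW_cons_cons b a b' (a' :: u') v']
          rw [show a' + (a + b) = a + a' + b from by omega,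
            show b' + (a + b) = b + a + b' from by omega]
          simp only [map_add]
          abel

lemma dshW_fW (a b : ℕ) (u v : List ℕ) :
    dshW (a :: u) (b :: v) = fW a u (b :: v) + fW b (a :: u) v :=
  dshW_cons' (u.length + v.length) u v a b le_rfl

lemma single_eq (w : List ℕ) (c : ℚ) : (Finsupp.single w c : XX) = c • wX w := by
  simp [wX, Finsupp.smul_single]

lemma dshL_consX (a b : ℕ) (U W : XX) :
    dshL (consX a U) (consX b W) = fL a U (consX b W) + fL b (consX a U) W := by
  induction U using Finsupp.induction_linear with
  | zero => simp
  | add f g hf hg =>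
      simp only [map_add, LinearMap.add_apply, hf, hg]; abel
  | single u c =>
      induction W using Finsupp.induction_linear with
      | zero => simp
      | add f g hf hg =>
          simp only [map_add, LinearMap.add_apply, hf, hg]; abel
      | single w d =>
          rw [single_eq, single_eq]
          simp only [map_smul, LinearMap.smul_apply, consX_wX, dshL_wX_wX, fL_wX_wX,
            dshW_fW, smul_add]

lemma SX_nil : SX (wX []) = wX [] := by simp [SX_wX]

lemma SX_snoc (w : List ℕ) (k : ℕ) : SX (wX (w ++ [k])) = -(consX k (SX (wX w))) := by
  rw [SX_wX, SX_wX, map_smul, consX_wX]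
  simp [pow_succ, mul_smul]

lemma dshL_one (x : XX) : dshL (wX []) x = x := by
  induction x using Finsupp.induction_linear with
  | zero => simp
  | add f g hf hg => simp [map_add, hf, hg]
  | single w c => rw [single_eq, map_smul, dshL_wX_wX, dshW_nil_left]

lemma fL_one (c : ℕ) (x : XX) : fL c (wX []) x = consX c x := by
  induction x using Finsupp.induction_linear with
  | zero => simp
  | add f g hf hg => simp [map_add, hf, hg]
  | single w d => rw [single_eq, map_smul, fL_wX_wX, fW_nil_left, map_smul, consX_wX]

lemma consListX_nil (x : XX) : consListX [] x = x := by
  induction x using Finsupp.induction_linear with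
  | zero => simp
  | add f g hf hg => simp [map_add, hf, hg]
  | single w c => rw [single_eq, map_smul, consListX_wX, List.nil_append]

lemma consListX_cons (c : ℕ) (t : List ℕ) (x : XX) :
    consListX (c :: t) x = consX c (consListX t x) := by
  induction x using Finsupp.induction_linear with
  | zero => simp
  | add f g hf hg => simp [map_add, hf, hg]
  | single w d =>
      rw [single_eq, map_smul, map_smul, map_smul, consListX_wX, consListX_wX, consX_wX,
        List.cons_append]

/-- Lemma `move_an`: telescoping sum identity. -/
theorem telescoping (n : ℕ) (hn : 1 ≤ n) (a : Fin n → ℕ) (ha : ∀ i, 1 ≤ a i) (v : XX) :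
    (∑ i ∈ Finset.range n,
        dshL (SX (wX ((List.ofFn a).take i))) (consListX ((List.ofFn a).drop i) v)) =
      fL (a ⟨n - 1, by omega⟩) (SX (wX ((List.ofFn a).take (n - 1)))) v := by
  obtain ⟨m, rfl⟩ : ∃ m, n = m + 1 := ⟨n - 1, by omega⟩
  set L := List.ofFn a with hL
  have hlen : L.length = m + 1 := by simp [hL]
  set T : ℕ → XX := fun j =>
    fL (L.getD j 0) (SX (wX (L.take j))) (consListX (L.drop (j + 1)) v) with hT
  have hdrop : ∀ j, j < m + 1 → L.drop j = L.getD j 0 :: L.drop (j + 1) := by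
    intro j hj
    rw [List.getD_eq_getElem L 0 (by omega), List.drop_eq_getElem_cons (by omega)]
  have htake : ∀ j, j < m + 1 → L.take (j + 1) = L.take j ++ [L.getD j 0] := by
    intro j hj
    rw [List.take_succ, List.getElem?_eq_getElem (by omega), List.getD_eq_getElem L 0 (by omega)]
    rfl
  have hterm0 : dshL (SX (wX (L.take 0))) (consListX (L.drop 0) v) = T 0 := by
    rw [List.take_zero, SX_nil, List.drop_zero, dshL_one, hT]
    simp only
    rw [List.take_zero, SX_nil, fL_one, ← consListX_cons, ← hdrop 0 (by omega), List.drop_zero]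
  have hstep : ∀ i, i < m →
      dshL (SX (wX (L.take (i + 1)))) (consListX (L.drop (i + 1)) v) = T (i + 1) - T i := by
    intro i hi
    rw [htake i (by omega), SX_snoc, hdrop (i + 1) (by omega), consListX_cons,
      map_neg, LinearMap.neg_apply, dshL_consX, ← consListX_cons, ← hdrop (i + 1) (by omega)]
    rw [hT]
    simp only
    rw [htake i (by omega), SX_snoc, map_neg, LinearMap.neg_apply]
    abel
  rw [Finset.sum_range_succ']
  rw [Finset.sum_congr rfl (fun i hi => hstep i (Finset.mem_range.mp hi)), hterm0,
    Finset.sum_range_sub T m]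
  have hfinal : T m = fL (a ⟨m + 1 - 1, by omega⟩) (SX (wX (L.take (m + 1 - 1)))) v := by
    rw [hT]
    simp only
    rw [show L.drop (m + 1) = [] from by
        apply List.drop_eq_nil_of_le; omega,
      consListX_nil]
    have hg : L.getD m 0 = a ⟨m + 1 - 1, by omega⟩ := by
      rw [List.getD_eq_getElem L 0 (by omega)]
      simp only [hL, List.getElem_ofFn]
      exact congrArg a (Fin.ext rfl)
    rw [hg]
    rfl
  rw [← hfinal]
  abel

end BlockShuffle
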